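/- In the I-GMANOVA setup, let R̂₀ = K⁻¹(S_c + S_c^{1/2} P_{A₀}^⊥ Z_{W1} P_{C†} Z_{W1}† P_{A₀}^⊥ S_c^{1/2}), which is Hermitian positive definite, and define Z_{d,0} = Z − S_c^{1/2} P_{A₀} S_c^{-1/2} Z P_{C†}. Then R̂₀⁻¹ Z_{d,0} P_{C†} = S_c^{-1/2} P_{A₀}^⊥ S_c^{1/2} R̂₀⁻¹ Z P_{C†}. -/

import Mathlib

/-!
Write `S = S_c^{1/2}`, `Q = P_{A₀}^⊥` and `B = I + Q Z_{W1} P_{C†} Z_{W1}† Q`, so that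
`R̂₀ = K⁻¹ S B S`. Since `P_{C†}` is a Hermitian idempotent, `B = I + XX†` is positive definite
(`X = Q Z_{W1} P_{C†}`), and since `Q` is idempotent, `B` (hence `B⁻¹`) commutes with `Q`. Because
`Z_{d,0} P_{C†} = S Q S⁻¹ Z P_{C†}`, both sides of the identity equal `K S⁻¹ B⁻¹ Q S⁻¹ Z P_{C†}`.
-/

open Matrix
open scoped ComplexOrder

noncomputable section

/-- Orthogonal projector onto the column space of `F`: `P_F = F (Fᴴ F)⁻¹ Fᴴ`. -/
def proj {n m : Type*} [Fintype n] [Fintype m] [DecidableEq n] [DecidableEq m]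
    (F : Matrix n m ℂ) : Matrix n n ℂ :=
  F * (Fᴴ * F)⁻¹ * Fᴴ

/-- Complementary projector `P_F^⊥ = I - P_F`. -/
def projPerp {n m : Type*} [Fintype n] [Fintype m] [DecidableEq n] [DecidableEq m]
    (F : Matrix n m ℂ) : Matrix n n ℂ :=
  1 - proj F

/-- The square root of a positive semidefinite matrix, as defined in the older Mathlib
(removed since): `U * diagonal (√ eigenvalues) * Uᴴ`. -/
def Matrix.PosSemidef.sqrt {n 𝕜 : Type*} [Fintype n] [DecidableEq n] [RCLike 𝕜]
    {A : Matrix n n 𝕜} (hA : A.PosSemidef) : Matrix n n 𝕜 :=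
  (hA.1.eigenvectorUnitary : Matrix n n 𝕜) *
    diagonal (fun i => ((Real.sqrt (hA.1.eigenvalues i) : ℝ) : 𝕜)) *
    (star hA.1.eigenvectorUnitary : Matrix n n 𝕜)

lemma IsIdempotentElem.commute_one_add_mul_mul {R : Type*} [Ring R] {q : R}
    (hq : IsIdempotentElem q) (x : R) : Commute q (1 + q * x * q) := by
  refine (Commute.one_right q).add_right ?_
  simp only [Commute, SemiconjBy, ← mul_assoc, hq.eq]
  rw [mul_assoc _ q q, hq.eq]

namespace Matrix

variable {n k : Type*} [Fintype n] [DecidableEq n] [Fintype k]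

lemma nonsing_inv_mul_mul_nonsing_inv {α : Type*} [CommRing α] (A : Matrix n n α) :
    A⁻¹ * A * A⁻¹ = A⁻¹ := by
  by_cases h : IsUnit A.det
  · rw [nonsing_inv_mul _ h, Matrix.one_mul]
  · simp [nonsing_inv_apply_not_isUnit _ h]

lemma commute_nonsing_inv_right {α : Type*} [CommRing α] {A B : Matrix n n α}
    (h : Commute A B) : Commute A B⁻¹ := by
  by_cases hB : IsUnit B.det
  · lift B to (Matrix n n α)ˣ using (isUnit_iff_isUnit_det B).mpr hB
    rw [← coe_units_inv]
    exact h.units_inv_right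
  · simp [nonsing_inv_apply_not_isUnit _ hB]

lemma inv_smul_eq_inv_smul_inv {α : Type*} [Field α] (c : α) (A : Matrix n n α) :
    (c • A)⁻¹ = c⁻¹ • A⁻¹ := by
  rcases eq_or_ne c 0 with rfl | hc
  · simp
  by_cases hA : IsUnit A.det
  · exact inv_smul' A (Units.mk0 c hc) hA
  · have hcA : ¬ IsUnit (c • A).det := by simpa [det_smul, hc] using hA
    simp [nonsing_inv_apply_not_isUnit _ hA, nonsing_inv_apply_not_isUnit _ hcA]

namespace PosSemidef

variable {𝕜 : Type*} [RCLike 𝕜] {A : Matrix n n 𝕜}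

lemma isHermitian_sqrt (hA : A.PosSemidef) : hA.sqrt.IsHermitian := by
  unfold Matrix.PosSemidef.sqrt
  rw [star_eq_conjTranspose]
  exact isHermitian_mul_mul_conjTranspose _ (isHermitian_diagonal_of_self_adjoint _
    (by ext i; simp))

lemma sqrt_mul_self (hA : A.PosSemidef) : hA.sqrt * hA.sqrt = A := by
  set U : Matrix n n 𝕜 := (hA.1.eigenvectorUnitary : Matrix n n 𝕜)
  set D : Matrix n n 𝕜 := diagonal fun i => ((Real.sqrt (hA.1.eigenvalues i) : ℝ) : 𝕜)
  have hUU : star U * U = 1 := Unitary.coe_star_mul_self _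
  have hDD : D * D = diagonal (RCLike.ofReal ∘ hA.1.eigenvalues) := by
    rw [diagonal_mul_diagonal]
    congr 1 with i
    rw [Function.comp_apply, ← RCLike.ofReal_mul, Real.mul_self_sqrt (hA.eigenvalues_nonneg i)]
  calc hA.sqrt * hA.sqrt = U * (D * (star U * U) * D) * star U := by
        simp only [Matrix.PosSemidef.sqrt, U, D, Matrix.mul_assoc]
    _ = A := by
      rw [hUU, Matrix.mul_one, hDD]
      conv_rhs => rw [hA.1.spectral_theorem, Unitary.conjStarAlgAut_apply]

end PosSemidef

lemma PosDef.isUnit_det_sqrt {𝕜 : Type*} [RCLike 𝕜] {A : Matrix n n 𝕜} (hA : A.PosDef) :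
    IsUnit hA.posSemidef.sqrt.det := by
  refine isUnit_of_mul_isUnit_left (y := hA.posSemidef.sqrt.det) ?_
  rw [← det_mul, hA.posSemidef.sqrt_mul_self]
  exact (isUnit_iff_isUnit_det _).mp hA.isUnit

lemma sub_conj_mul_mul_of_isIdempotentElem {α : Type*} [Field α] {S : Matrix n n α}
    (hS : IsUnit S.det) (E : Matrix n n α) (Z : Matrix n k α) {P : Matrix k k α}
    (hP : IsIdempotentElem P) :
    (Z - S * E * S⁻¹ * Z * P) * P = S * (1 - E) * S⁻¹ * Z * P := by
  rw [Matrix.sub_mul, Matrix.mul_assoc _ P P, hP.eq]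
  simp only [Matrix.mul_sub, Matrix.sub_mul, Matrix.mul_one, mul_nonsing_inv _ hS, Matrix.one_mul]

lemma inv_smul_sandwich_mul_conj {α : Type*} [Field α] {S Q B : Matrix n n α} (c : α)
    (hS : IsUnit S.det) (hQB : Commute Q B) :
    (c • (S * B * S))⁻¹ * (S * Q * S⁻¹) = S⁻¹ * Q * S * (c • (S * B * S))⁻¹ := by
  have hQB' : Q * B⁻¹ = B⁻¹ * Q := commute_nonsing_inv_right hQB
  rw [inv_smul_eq_inv_smul_inv, Matrix.mul_inv_rev, Matrix.mul_inv_rev]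
  simp only [Matrix.smul_mul, Matrix.mul_smul, Matrix.mul_assoc, nonsing_inv_mul_cancel_left _ _ hS,
    mul_nonsing_inv_cancel_left _ _ hS]
  rw [← Matrix.mul_assoc Q, hQB', Matrix.mul_assoc]

lemma posDef_one_add_sandwich {𝕜 : Type*} [RCLike 𝕜] {Q : Matrix n n 𝕜} (hQ : Q.IsHermitian)
    (W : Matrix n k 𝕜) {P : Matrix k k 𝕜}
    (hP : P.IsHermitian) (hP2 : IsIdempotentElem P) :
    (1 + Q * (W * P * Wᴴ) * Q).PosDef := by
  have : Q * (W * P * Wᴴ) * Q = (Q * W * P) * (Q * W * P)ᴴ := by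
    simp only [conjTranspose_mul, hP.eq, hQ.eq, Matrix.mul_assoc, ← Matrix.mul_assoc P P, hP2.eq]
  rw [this]
  exact PosDef.one.add_posSemidef (posSemidef_self_mul_conjTranspose _)

lemma PosDef.smul_sandwich {S B : Matrix n n ℂ} (hB : B.PosDef) (hS : S.IsHermitian)
    (hSdet : IsUnit S.det) {c : ℂ} (hc : 0 < c) :
    (c • (S * B * S)).PosDef := by
  have h := hB.conjTranspose_mul_mul_same (mulVec_injective_of_isUnit
    ((isUnit_iff_isUnit_det S).mpr hSdet))
  rw [hS.eq] at h
  exact h.smul hc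

end Matrix

section Projection

variable {n m : Type*} [Fintype n] [Fintype m] [DecidableEq n] [DecidableEq m]
  (F : Matrix n m ℂ)

lemma isHermitian_proj : (proj F).IsHermitian :=
  isHermitian_mul_mul_conjTranspose F (isHermitian_conjTranspose_mul_self F).inv

lemma isIdempotentElem_proj : IsIdempotentElem (proj F) := by
  calc proj F * proj F = F * ((Fᴴ * F)⁻¹ * (Fᴴ * F) * (Fᴴ * F)⁻¹) * Fᴴ := by
        simp only [proj, Matrix.mul_assoc]
    _ = proj F := by rw [nonsing_inv_mul_mul_nonsing_inv, proj]

lemma isHermitian_projPerp : (projPerp F).IsHermitian :=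
  isHermitian_one.sub (isHermitian_proj F)

lemma isIdempotentElem_projPerp : IsIdempotentElem (projPerp F) :=
  (isIdempotentElem_proj F).one_sub

lemma proj_conjTranspose (G : Matrix m n ℂ) : proj Gᴴ = Gᴴ * (G * Gᴴ)⁻¹ * G := by
  rw [proj, conjTranspose_conjTranspose]

end Projection

theorem gradient_compact_form_identity_general
    (N K M t : ℕ) (hK : 0 < K)
    (Sc : Matrix (Fin N) (Fin N) ℂ) (hS : Sc.PosDef)
    (Z : Matrix (Fin N) (Fin K) ℂ) :
    let Et : Matrix (Fin N) (Fin t) ℂ := Matrix.of fun i j => if (i : ℕ) = (j : ℕ) then 1 else 0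
    let C : Matrix (Fin M) (Fin K) ℂ := Matrix.of fun i j => if (i : ℕ) = (j : ℕ) then 1 else 0
    let PC : Matrix (Fin K) (Fin K) ℂ := Cᴴ * (C * Cᴴ)⁻¹ * C
    let Shalf : Matrix (Fin N) (Fin N) ℂ := hS.posSemidef.sqrt
    let ZW1 : Matrix (Fin N) (Fin K) ℂ := Shalf⁻¹ * Z
    let A0 : Matrix (Fin N) (Fin t) ℂ := Shalf⁻¹ * Et
    let R0 : Matrix (Fin N) (Fin N) ℂ :=
      ((K : ℂ))⁻¹ • (Sc + Shalf * projPerp A0 * ZW1 * PC * ZW1ᴴ * projPerp A0 * Shalf)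
    let Zd0 : Matrix (Fin N) (Fin K) ℂ := Z - Shalf * proj A0 * Shalf⁻¹ * Z * PC
    R0.PosDef ∧
      R0⁻¹ * Zd0 * PC = Shalf⁻¹ * projPerp A0 * Shalf * R0⁻¹ * Z * PC := by
  intro Et C PC Shalf ZW1 A0 R0 Zd0
  have hSH : Shalf.IsHermitian := hS.posSemidef.isHermitian_sqrt
  have hSS : Shalf * Shalf = Sc := hS.posSemidef.sqrt_mul_self
  have hSdet : IsUnit Shalf.det := hS.isUnit_det_sqrt
  obtain ⟨hPCh, hPCi⟩ : PC.IsHermitian ∧ IsIdempotentElem PC := by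
    rw [show PC = proj Cᴴ from (proj_conjTranspose C).symm]
    exact ⟨isHermitian_proj _, isIdempotentElem_proj _⟩
  set B := 1 + projPerp A0 * (ZW1 * PC * ZW1ᴴ) * projPerp A0
  have hR0 : R0 = (K : ℂ)⁻¹ • (Shalf * B * Shalf) := by
    simp only [R0, B, Matrix.mul_add, Matrix.add_mul, Matrix.mul_one, hSS, Matrix.mul_assoc]
  have hB : B.PosDef := posDef_one_add_sandwich (isHermitian_projPerp A0) ZW1 hPCh hPCi
  refine ⟨?_, ?_⟩
  · rw [hR0]
    exact hB.smul_sandwich hSH hSdet (inv_pos.mpr (Nat.cast_pos.mpr hK))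
  · have hQB : Commute (projPerp A0) B := (isIdempotentElem_projPerp A0).commute_one_add_mul_mul _
    calc R0⁻¹ * Zd0 * PC = R0⁻¹ * (Shalf * projPerp A0 * Shalf⁻¹) * (Z * PC) := by
          rw [Matrix.mul_assoc, sub_conj_mul_mul_of_isIdempotentElem hSdet _ Z hPCi]
          simp only [projPerp, Matrix.mul_assoc]
      _ = Shalf⁻¹ * projPerp A0 * Shalf * R0⁻¹ * Z * PC := by
          rw [hR0, inv_smul_sandwich_mul_conj _ hSdet hQB]
          simp only [Matrix.mul_assoc]

/-- Eq. (G.1) of the paper: `R̂₀⁻¹ Z_{d,0} P_{Cᴴ} = S_c^{-1/2} P_{A₀}^⊥ S_c^{1/2} R̂₀⁻¹ Z P_{Cᴴ}`,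
where `R̂₀` is Hermitian positive definite. -/
theorem gradient_compact_form_identity
    (N K M t r : ℕ) (hN : 0 < N) (hK : 0 < K) (hM : 0 < M) (ht : 0 < t) (hr : 0 < r)
    (hJ : t + r ≤ N) (hMK : M ≤ K)
    (Sc : Matrix (Fin N) (Fin N) ℂ) (hS : Sc.PosDef)
    (Z : Matrix (Fin N) (Fin K) ℂ) :
    let Et : Matrix (Fin N) (Fin t) ℂ := Matrix.of fun i j => if (i : ℕ) = (j : ℕ) then 1 else 0
    let C : Matrix (Fin M) (Fin K) ℂ := Matrix.of fun i j => if (i : ℕ) = (j : ℕ) then 1 else 0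
    let PC : Matrix (Fin K) (Fin K) ℂ := Cᴴ * (C * Cᴴ)⁻¹ * C
    let Shalf : Matrix (Fin N) (Fin N) ℂ := hS.posSemidef.sqrt
    let ZW1 : Matrix (Fin N) (Fin K) ℂ := Shalf⁻¹ * Z
    let A0 : Matrix (Fin N) (Fin t) ℂ := Shalf⁻¹ * Et
    let R0 : Matrix (Fin N) (Fin N) ℂ :=
      ((K : ℂ))⁻¹ • (Sc + Shalf * projPerp A0 * ZW1 * PC * ZW1ᴴ * projPerp A0 * Shalf)
    let Zd0 : Matrix (Fin N) (Fin K) ℂ := Z - Shalf * proj A0 * Shalf⁻¹ * Z * PC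
    R0.PosDef ∧
      R0⁻¹ * Zd0 * PC = Shalf⁻¹ * projPerp A0 * Shalf * R0⁻¹ * Z * PC :=
  gradient_compact_form_identity_general N K M t hK Sc hS Z
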